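/- arXiv:1010.6257 — 3 statements merged into one kernel-verified Lean document; each statement's English description precedes it below -/
import Mathlib

section
/- Let n ≥ 1 and let a_1, …, a_n ≥ 2 be integers, let Λ(a_1,…,a_n) be the linear lattice on ℤ^n, and let T = {i, i+1, …, j} ⊆ {1,…,n} be an interval with class [T] = x_i + x_{i+1} + ⋯ + x_j. Then [T] is unbreakable if and only if at most one index k with i ≤ k ≤ j satisfies a_k ≥ 3. -/
/-!
Writing `Λ(a)` as `Λ(2,…,2)` plus the diagonal `a - 2`, the norm of `x` becomes
`∑ (a_k - 2) x_k² + ∑ (increments of 0, x₁, …, xₙ, 0)²`. The increments are integers summing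
to `0`, so for `x ≠ 0` their squares add up to at least `2`; hence `⟨x, x⟩ ≥ a_p` whenever
`x_p ≠ 0`. If `[T] = x + y` with `⟨x, y⟩ = -1`, then `⟨x, x⟩ + ⟨y, y⟩ = ⟨[T], [T]⟩ + 2`, and for
every `p ∈ T` one of `x_p`, `y_p` is nonzero. When `a = 2` on `T` except at one `p`, we get
`⟨[T], [T]⟩ = a_p`, so the summand not vanishing at `p` has norm `≥ a_p` and the other one norm
`≤ 2`. Conversely, two indices `p < q` of `T` with `a_p, a_q ≥ 3` split `T` after `p` into two
intervals of norm `≥ 3` whose classes pair to `-1`.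
-/

/-- The Gram matrix of the linear lattice `Λ(a₁,…,aₙ)`: diagonal entries `aᵢ`,
entries `-1` between consecutive indices, and `0` otherwise. -/
def linMat {n : ℕ} (a : Fin n → ℤ) (i j : Fin n) : ℤ :=
  if i = j then a i else if (((i : ℕ) : ℤ) - ((j : ℕ) : ℤ)).natAbs = 1 then -1 else 0

/-- The symmetric bilinear form of the linear lattice `Λ(a₁,…,aₙ)` on `ℤⁿ`. -/
def linForm {n : ℕ} (a : Fin n → ℤ) (x y : Fin n → ℤ) : ℤ :=
  ∑ i, ∑ j, linMat a i j * x i * y j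

open Finset

theorem two_le_sum_sq_of_sum_eq_zero {ι : Type*} {s : Finset ι} {f : ι → ℤ}
    (hsum : ∑ i ∈ s, f i = 0) (hf : ∃ i ∈ s, f i ≠ 0) : 2 ≤ ∑ i ∈ s, f i ^ 2 := by
  obtain ⟨i, hi, hfi⟩ := hf
  -- `f² ≡ f (mod 2)`, so the sum of squares is even, and it is positive.
  have hpos : 0 < ∑ i ∈ s, f i ^ 2 :=
    sum_pos' (fun i _ => sq_nonneg (f i)) ⟨i, hi, by positivity⟩
  have hsplit : ∑ i ∈ s, f i ^ 2 = ∑ i ∈ s, f i * (f i - 1) + ∑ i ∈ s, f i := by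
    rw [← sum_add_distrib]
    exact sum_congr rfl fun _ _ => by ring
  obtain ⟨r, hr⟩ : Even (∑ i ∈ s, f i ^ 2) := by
    rw [hsplit, hsum, add_zero]
    exact even_sum _ fun i _ => Int.even_mul_pred_self (f i)
  omega

namespace LinearLattice

variable {n : ℕ}

/-- `x` extended by zero to `ℕ`, with `x k` placed at `k + 1`: the increments `diff x m` below
then run over the whole sequence `0, x₀, …, xₙ₋₁, 0`. -/
def pad (x : Fin n → ℤ) : ℕ → ℤ
  | 0 => 0
  | m + 1 => if h : m < n then x ⟨m, h⟩ else 0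

@[simp] lemma pad_zero (x : Fin n → ℤ) : pad x 0 = 0 := rfl

@[simp] lemma pad_val_add_one (x : Fin n → ℤ) (k : Fin n) : pad x (k + 1) = x k := by
  simp [pad]

lemma pad_of_lt (x : Fin n → ℤ) {m : ℕ} (h : n < m) : pad x m = 0 := by
  obtain ⟨m, rfl⟩ : ∃ m', m = m' + 1 := ⟨m - 1, by omega⟩
  simp [pad, show ¬ m < n by omega]

lemma sum_ite_val_add_one_eq (y : Fin n → ℤ) (m : ℕ) :
    ∑ j : Fin n, (if (j : ℕ) + 1 = m then y j else 0) = pad y m := by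
  cases m with
  | zero => simp
  | succ m =>
    by_cases h : m < n
    · simp only [pad, h, dif_pos, add_left_inj]
      rw [sum_eq_single ⟨m, h⟩] <;> simp +contextual [Fin.ext_iff]
    · simp only [pad, h, dif_neg, not_false_eq_true]
      exact sum_eq_zero fun j _ => if_neg (by omega)

lemma sum_linMat_mul (a y : Fin n → ℤ) (i : Fin n) :
    ∑ j, linMat a i j * y j = a i * y i - pad y i - pad y (i + 2) := by
  have hrow : ∀ j, linMat a i j * y j = (if i = j then a i * y j else 0)
      - (if (j : ℕ) + 1 = i then y j else 0) - (if (j : ℕ) + 1 = i + 2 then y j else 0) := by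
    intro j
    unfold linMat
    rcases eq_or_ne i j with rfl | h
    · simp
    · have := Fin.val_ne_of_ne h
      rw [if_neg h, if_neg h]
      split_ifs <;> omega
  simp only [hrow, sum_sub_distrib, sum_ite_eq, mem_univ, if_true, sum_ite_val_add_one_eq]

def diff (x : Fin n → ℤ) (m : ℕ) : ℤ := pad x (m + 1) - pad x m

theorem linForm_eq (a x y : Fin n → ℤ) :
    linForm a x y = ∑ k, (a k - 2) * x k * y k + ∑ m ∈ range (n + 1), diff x m * diff y m := by
  have hL : linForm a x y = ∑ k, x k * (a k * y k - pad y k - pad y (k + 2)) := by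
    simp only [linForm, ← sum_linMat_mul, mul_sum]
    exact sum_congr rfl fun _ _ => sum_congr rfl fun _ _ => by ring
  have hD : ∑ m ∈ range (n + 1), diff x m * diff y m
      = ∑ k : Fin n, x k * (2 * y k - pad y k - pad y (k + 2)) := by
    calc ∑ m ∈ range (n + 1), diff x m * diff y m
        = ∑ m ∈ range (n + 1), pad x (m + 1) * diff y m
          - ∑ m ∈ range (n + 1), pad x m * diff y m := by
          simp only [diff, sub_mul, sum_sub_distrib]
      _ = ∑ m ∈ range n, pad x (m + 1) * (diff y m - diff y (m + 1)) := by
          rw [sum_range_succ, sum_range_succ', pad_of_lt x (Nat.lt_succ_self n)]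
          simp only [pad_zero, zero_mul, add_zero, mul_sub, sum_sub_distrib]
      _ = ∑ k : Fin n, x k * (2 * y k - pad y k - pad y (k + 2)) := by
          rw [← Fin.sum_univ_eq_sum_range (fun m => pad x (m + 1) * (diff y m - diff y (m + 1)))]
          refine sum_congr rfl fun k _ => ?_
          simp only [diff, pad_val_add_one]
          ring
  rw [hL, hD, ← sum_add_distrib]
  exact sum_congr rfl fun _ _ => by ring

lemma sum_diff_eq_zero (x : Fin n → ℤ) : ∑ m ∈ range (n + 1), diff x m = 0 := by
  simp only [diff]
  rw [sum_range_sub (pad x), pad_of_lt x (Nat.lt_succ_self n), pad_zero, sub_zero]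

lemma exists_diff_ne_zero {x : Fin n → ℤ} (hx : x ≠ 0) : ∃ m ∈ range (n + 1), diff x m ≠ 0 := by
  by_contra! h
  refine hx (funext fun k => ?_)
  have htel : ∑ m ∈ range (k + 1), diff x m = pad x (k + 1) - pad x 0 := sum_range_sub _ _
  rw [sum_eq_zero fun m hm => h m (by simp at hm ⊢; omega)] at htel
  simpa using htel.symm

theorem le_linForm_self {a x : Fin n → ℤ} (ha : ∀ k, 2 ≤ a k) {p : Fin n} (hp : x p ≠ 0) :
    a p ≤ linForm a x x := by
  have hV : 2 ≤ ∑ m ∈ range (n + 1), diff x m * diff x m := by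
    simp only [← sq]
    exact two_le_sum_sq_of_sum_eq_zero (sum_diff_eq_zero x)
      (exists_diff_ne_zero fun h => hp (by simp [h]))
  have hW : (a p - 2) * x p * x p ≤ ∑ k, (a k - 2) * x k * x k :=
    single_le_sum (f := fun k => (a k - 2) * x k * x k)
      (fun k _ => by rw [mul_assoc]; exact mul_nonneg (by linarith [ha k]) (mul_self_nonneg _))
      (mem_univ p)
  have hxp : 1 ≤ x p * x p := by rcases lt_or_gt_of_ne hp with h | h <;> nlinarith
  rw [linForm_eq]
  nlinarith [ha p]

theorem linForm_add_left (a x y z : Fin n → ℤ) :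
    linForm a (x + y) z = linForm a x z + linForm a y z := by
  simp only [linForm, Pi.add_apply, mul_add, add_mul, sum_add_distrib]

theorem linForm_add_right (a x y z : Fin n → ℤ) :
    linForm a x (y + z) = linForm a x y + linForm a x z := by
  simp only [linForm, Pi.add_apply, mul_add, sum_add_distrib]

theorem linForm_comm (a x y : Fin n → ℤ) : linForm a x y = linForm a y x := by
  rw [linForm_eq, linForm_eq]
  congr 1 <;> exact sum_congr rfl fun _ _ => by ring

theorem linForm_add_self (a x y : Fin n → ℤ) :
    linForm a (x + y) (x + y) = linForm a x x + 2 * linForm a x y + linForm a y y := by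
  rw [linForm_add_left, linForm_add_right, linForm_add_right, linForm_comm a y x]
  ring

def IsBreakable (a v : Fin n → ℤ) : Prop :=
  ∃ x y : Fin n → ℤ, v = x + y ∧ 3 ≤ linForm a x x ∧ 3 ≤ linForm a y y ∧ linForm a x y = -1

theorem not_isBreakable {a v : Fin n → ℤ} (ha : ∀ k, 2 ≤ a k) {p : Fin n} (hv : v p = 1)
    (hQ : linForm a v v ≤ a p) : ¬ IsBreakable a v := by
  rintro ⟨x, y, rfl, hx, hy, hxy⟩
  have hsum := linForm_add_self a x y
  have hp : x p ≠ 0 ∨ y p ≠ 0 := by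
    simp only [Pi.add_apply] at hv
    omega
  rcases hp with hp | hp
  · linarith [le_linForm_self ha hp]
  · linarith [le_linForm_self ha hp]

def intervalClass (n lo hi : ℕ) : Fin n → ℤ :=
  fun k => if lo ≤ (k : ℕ) ∧ (k : ℕ) ≤ hi then 1 else 0

variable {lo hi : ℕ}

lemma pad_intervalClass (hhi : hi < n) (m : ℕ) :
    pad (intervalClass n lo hi) m = if lo + 1 ≤ m ∧ m ≤ hi + 1 then 1 else 0 := by
  cases m with
  | zero => simp
  | succ m =>
    by_cases h : m < n
    · simp [pad, intervalClass, h]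
    · simp only [pad, h, dif_neg, not_false_eq_true]
      rw [if_neg (by omega)]

lemma diff_intervalClass (hlo : lo ≤ hi) (hhi : hi < n) (m : ℕ) :
    diff (intervalClass n lo hi) m = (if m = lo then 1 else 0) - (if m = hi + 1 then 1 else 0) := by
  simp only [diff, pad_intervalClass hhi]
  split_ifs <;> omega

lemma sum_diff_intervalClass_mul_self (hlo : lo ≤ hi) (hhi : hi < n) :
    ∑ m ∈ range (n + 1), diff (intervalClass n lo hi) m
      * diff (intervalClass n lo hi) m = 2 := by
  have hpt : ∀ m, diff (intervalClass n lo hi) m * diff (intervalClass n lo hi) m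
      = (if m = lo then 1 else 0) + (if m = hi + 1 then 1 else 0) := by
    intro m
    rw [diff_intervalClass hlo hhi]
    split_ifs <;> omega
  simp only [hpt, sum_add_distrib, sum_ite_eq', mem_range]
  rw [if_pos (by omega), if_pos (by omega)]
  rfl

lemma sum_diff_intervalClass_mul_succ {p : ℕ} (hlo : lo ≤ p) (hp : p < hi) (hhi : hi < n) :
    ∑ m ∈ range (n + 1), diff (intervalClass n lo p) m
      * diff (intervalClass n (p + 1) hi) m = -1 := by
  have hpt : ∀ m, diff (intervalClass n lo p) m * diff (intervalClass n (p + 1) hi) m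
      = -(if m = p + 1 then 1 else 0) := by
    intro m
    rw [diff_intervalClass hlo (by omega), diff_intervalClass (by omega) hhi]
    split_ifs <;> omega
  simp only [hpt, sum_neg_distrib, sum_ite_eq', mem_range]
  rw [if_pos (by omega)]

theorem linForm_intervalClass_self {a : Fin n → ℤ} (hhi : hi < n) {p : Fin n}
    (hlop : lo ≤ p) (hphi : p ≤ hi) (h2 : ∀ k : Fin n, lo ≤ k → k ≤ hi → k ≠ p → a k = 2) :
    linForm a (intervalClass n lo hi) (intervalClass n lo hi) = a p := by
  have hW : ∑ k, (a k - 2) * intervalClass n lo hi k * intervalClass n lo hi k = a p - 2 := by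
    rw [sum_eq_single p]
    · simp [intervalClass, hlop, hphi]
    · intro k _ hkp
      by_cases hk : lo ≤ k ∧ k ≤ hi
      · simp [h2 k hk.1 hk.2 hkp]
      · simp [intervalClass, hk]
    · simp
  rw [linForm_eq, hW, sum_diff_intervalClass_mul_self (hlop.trans hphi) hhi]
  ring

theorem linForm_intervalClass_succ (a : Fin n → ℤ) {p : ℕ} (hlo : lo ≤ p) (hp : p < hi)
    (hhi : hi < n) : linForm a (intervalClass n lo p) (intervalClass n (p + 1) hi) = -1 := by
  have hW : ∑ k, (a k - 2) * intervalClass n lo p k * intervalClass n (p + 1) hi k = 0 :=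
    sum_eq_zero fun k _ => by simp only [intervalClass]; split_ifs <;> omega
  rw [linForm_eq, hW, sum_diff_intervalClass_mul_succ hlo hp hhi, zero_add]

theorem isBreakable_intervalClass {a : Fin n → ℤ} (ha : ∀ k, 2 ≤ a k) (hhi : hi < n)
    {p q : Fin n} (hlo : lo ≤ p) (hpq : p < q) (hqhi : q ≤ hi) (hp : 3 ≤ a p) (hq : 3 ≤ a q) :
    IsBreakable a (intervalClass n lo hi) := by
  refine ⟨intervalClass n lo p, intervalClass n (p + 1) hi, ?_, ?_, ?_,
    linForm_intervalClass_succ a hlo (by omega) hhi⟩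
  · funext k
    simp only [intervalClass, Pi.add_apply]
    split_ifs <;> omega
  · exact hp.trans (le_linForm_self ha (p := p) (by simp [intervalClass, hlo]))
  · exact hq.trans (le_linForm_self ha (p := q) (by simp [intervalClass]; omega))

lemma exists_forall_eq_two_of_card_le_one {a : Fin n → ℤ} (ha : ∀ k, 2 ≤ a k) {i j : Fin n}
    (hij : i ≤ j) (hcard : (univ.filter fun k : Fin n => i ≤ k ∧ k ≤ j ∧ 3 ≤ a k).card ≤ 1) :
    ∃ p : Fin n, (i ≤ p ∧ p ≤ j) ∧ ∀ k : Fin n, i ≤ k → k ≤ j → k ≠ p → a k = 2 := by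
  by_cases h : ∃ p, i ≤ p ∧ p ≤ j ∧ 3 ≤ a p
  · obtain ⟨p, hip, hpj, hp⟩ := h
    refine ⟨p, ⟨hip, hpj⟩, fun k hik hkj hkp => ?_⟩
    by_contra hk
    exact hkp (card_le_one.mp hcard k (by simp [hik, hkj]; have := ha k; omega) p
      (by simp [hip, hpj, hp]))
  · push Not at h
    exact ⟨i, ⟨le_rfl, hij⟩, fun k hik hkj _ => le_antisymm (by linarith [h k hik hkj]) (ha k)⟩

end LinearLattice

theorem linear_lattice_unbreakable_general (n : ℕ) (a : Fin n → ℤ)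
    (ha : ∀ i, 2 ≤ a i) (i j : Fin n) (hij : i ≤ j) :
    (¬ ∃ x y : Fin n → ℤ,
        (fun k => if i ≤ k ∧ k ≤ j then (1 : ℤ) else 0) = x + y ∧
        3 ≤ linForm a x x ∧ 3 ≤ linForm a y y ∧ linForm a x y = -1) ↔
    (Finset.univ.filter fun k : Fin n => i ≤ k ∧ k ≤ j ∧ 3 ≤ a k).card ≤ 1 := by
  change ¬ LinearLattice.IsBreakable a (LinearLattice.intervalClass n i j) ↔ _
  constructor
  · intro hT
    by_contra! hcard
    obtain ⟨p, hp, q, hq, hpq⟩ := one_lt_card.mp hcard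
    simp only [mem_filter, mem_univ, true_and] at hp hq
    rcases lt_or_gt_of_ne hpq with h | h
    · exact hT (LinearLattice.isBreakable_intervalClass ha j.isLt hp.1 h hq.2.1 hp.2.2 hq.2.2)
    · exact hT (LinearLattice.isBreakable_intervalClass ha j.isLt hq.1 h hp.2.1 hq.2.2 hp.2.2)
  · intro hcard
    obtain ⟨p, ⟨hip, hpj⟩, h2⟩ := LinearLattice.exists_forall_eq_two_of_card_le_one ha hij hcard
    exact LinearLattice.not_isBreakable ha (p := p)
      (by simp [LinearLattice.intervalClass, hip, hpj])
      (LinearLattice.linForm_intervalClass_self j.isLt hip hpj h2).le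

/-- **Unbreakable intervals in a linear lattice.** In `Λ(a₁,…,aₙ)` (all
`aᵢ ≥ 2`), the class `[T] = x_i + ⋯ + x_j` of an interval `T = {i,…,j}` is
unbreakable iff at most one index `k ∈ T` has `a_k ≥ 3`. -/
theorem linear_lattice_unbreakable (n : ℕ) (hn : 1 ≤ n) (a : Fin n → ℤ)
    (ha : ∀ i, 2 ≤ a i) (i j : Fin n) (hij : i ≤ j) :
    (¬ ∃ x y : Fin n → ℤ,
        (fun k => if i ≤ k ∧ k ≤ j then (1 : ℤ) else 0) = x + y ∧
        3 ≤ linForm a x x ∧ 3 ≤ linForm a y y ∧ linForm a x y = -1) ↔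
    (Finset.univ.filter fun k : Fin n => i ≤ k ∧ k ≤ j ∧ 3 ≤ a k).card ≤ 1 :=
  linear_lattice_unbreakable_general n a ha i j hij
end

section
/- Let σ = (σ_0, …, σ_n) ∈ ℤ^{n+1} be a changemaker, let 1 ≤ j ≤ n, and let A ⊆ {0, …, j−1} satisfy Σ_{i∈A} σ_i = σ_j. Suppose A is maximal among such subsets in the sense that every A' ⊆ {0, …, j−1} with Σ_{i∈A'} σ_i = σ_j satisfies Σ_{i∈A'} 2^i ≤ Σ_{i∈A} 2^i. Then the vector v = −e_j + Σ_{i∈A} e_i is unbreakable in the changemaker lattice L = (σ)^⊥. -/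
/-!
Coordinatewise `x_i + y_i = v_i ∈ {-1, 0, 1}` forces `x_i * y_i ≤ 0`, so `⟨x, y⟩ = -1` means that
`x` and `y` overlap in a single coordinate `g`, where `v_g = 0`. Say `x_j = 0`. Then
`x = -e_g + ∑_{i ∈ B} e_i` for some `B ⊆ A` (positivity of `σ` fixes the sign at `g`) and
`y = e_g - e_j + ∑_{i ∈ A \ B} e_i`; the norm bounds give `|B| ≥ 2` and `A \ B ≠ ∅`, and
`⟨x, σ⟩ = 0` gives `σ_g = ∑_{i ∈ B} σ_i`. By monotonicity of `σ` all of `B` lies below `g`, and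
`g < j`, so `(A \ B) ∪ {g}` represents `σ_j` with a larger binary weight than `A`.
-/

/-- A changemaker vector: `1 = σ_0 ≤ σ_1 ≤ ⋯ ≤ σ_n` and
`σ_i ≤ σ_0 + ⋯ + σ_{i-1} + 1` for all `1 ≤ i ≤ n`. -/
def IsChangemaker {n : ℕ} (σ : Fin (n + 1) → ℤ) : Prop :=
  σ 0 = 1 ∧ Monotone σ ∧
    ∀ i : Fin (n + 1), i ≠ 0 → σ i ≤ (∑ j ∈ Finset.Iio i, σ j) + 1

open Finset

lemma Int.mul_nonpos_of_abs_add_le_one {a b : ℤ} (h : |a + b| ≤ 1) : a * b ≤ 0 := by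
  rw [abs_le] at h
  rcases lt_trichotomy a 0 with ha | rfl | ha <;> nlinarith

lemma Finset.exists_eq_neg_one_of_sum_eq_neg_one {ι : Type*} [Fintype ι] {f : ι → ℤ}
    (hf : ∀ i, f i ≤ 0) (hsum : ∑ i, f i = -1) : ∃ g, f g = -1 ∧ ∀ i ≠ g, f i = 0 := by
  classical
  obtain ⟨g, hg⟩ : ∃ g, f g ≠ 0 := by
    by_contra! h
    simp [h] at hsum
  have hsplit := add_sum_erase univ f (mem_univ g)
  have hrest : ∑ i ∈ univ.erase g, f i ≤ 0 := sum_nonpos fun i _ => hf i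
  have hfg : f g = -1 := by have := hf g; omega
  refine ⟨g, hfg, fun i hi => ?_⟩
  have hzero : ∑ i ∈ univ.erase g, f i = 0 := by omega
  exact (sum_eq_zero_iff_of_nonpos fun i _ => hf i).1 hzero i (mem_erase.2 ⟨hi, mem_univ i⟩)

lemma exists_mul_eq_neg_one_of_sum_mul_eq_neg_one {ι : Type*} [Fintype ι] {x y v : ι → ℤ}
    (hv : ∀ i, |v i| ≤ 1) (hxy : x + y = v) (hdot : ∑ i, x i * y i = -1) :
    ∃ g, v g = 0 ∧ x g * y g = -1 ∧ ∀ i ≠ g, x i * y i = 0 := by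
  have hnonpos : ∀ i, x i * y i ≤ 0 := fun i =>
    Int.mul_nonpos_of_abs_add_le_one (by simpa [← hxy] using hv i)
  obtain ⟨g, hg, hoff⟩ := exists_eq_neg_one_of_sum_eq_neg_one hnonpos hdot
  refine ⟨g, ?_, hg, hoff⟩
  rw [← hxy, Pi.add_apply]
  rcases Int.eq_one_or_neg_one_of_mul_eq_neg_one' hg with ⟨h₁, h₂⟩ | ⟨h₁, h₂⟩ <;> omega

lemma Fin.geomSum_lt {m b : ℕ} (hb : 2 ≤ b) {s : Finset (Fin m)} {g : Fin m}
    (hs : ∀ i ∈ s, i < g) : ∑ i ∈ s, b ^ (i : ℕ) < b ^ (g : ℕ) := by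
  simpa using Nat.geomSum_lt hb (s := s.map Fin.valEmbedding) (by simpa using hs)

lemma IsChangemaker.pos {n : ℕ} {σ : Fin (n + 1) → ℤ} (hσ : IsChangemaker σ) (i : Fin (n + 1)) :
    0 < σ i :=
  (hσ.1 ▸ one_pos).trans_le (hσ.2.1 (Fin.zero_le i))

section Exchange

variable {m : ℕ} {σ : Fin m → ℤ} {j g : Fin m} {A B : Finset (Fin m)}

lemma exists_lt_sum_two_pow_of_exchange (hpos : ∀ i, 0 < σ i) (hmono : Monotone σ)
    (hA : ∀ i ∈ A, i < j) (hsum : ∑ i ∈ A, σ i = σ j) (hBA : B ⊆ A) (hB : 1 < #B)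
    (hC : (A \ B).Nonempty) (hgA : g ∉ A) (hσg : σ g = ∑ i ∈ B, σ i) :
    ∃ A' : Finset (Fin m), (∀ i ∈ A', i < j) ∧ ∑ i ∈ A', σ i = σ j ∧
      ∑ i ∈ A, 2 ^ (i : ℕ) < ∑ i ∈ A', 2 ^ (i : ℕ) := by
  have hBg : ∀ b ∈ B, b < g := fun b hb => by
    obtain ⟨c, hcB, hcb⟩ := exists_mem_ne hB b
    exact hmono.reflect_lt <| hσg ▸ single_lt_sum hcb hb hcB (hpos c) fun k _ _ => (hpos k).le
  have hsplit : ∑ i ∈ A, σ i = ∑ i ∈ A \ B, σ i + σ g := by rw [hσg, sum_sdiff hBA]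
  have hgj : g < j := hmono.reflect_lt <| by
    linarith [sum_pos (fun i _ => hpos i) hC]
  have hgC : g ∉ A \ B := fun h => hgA (mem_sdiff.1 h).1
  refine ⟨insert g (A \ B), ?_, ?_, ?_⟩
  · simp only [mem_insert, mem_sdiff]
    rintro i (rfl | ⟨hi, -⟩)
    exacts [hgj, hA i hi]
  · rw [sum_insert hgC]; linarith
  · rw [sum_insert hgC, ← sum_sdiff hBA]
    linarith [Fin.geomSum_lt le_rfl hBg]

end Exchange

section Splitting

variable {ι : Type*} [Fintype ι] [DecidableEq ι] {z : ι → ℤ} {g : ι} {P N : Finset ι}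

lemma sum_mul_eq_of_eq_indicator_sub_indicator (hP : g ∉ P) (hN : g ∉ N)
    (hz : ∀ i ≠ g, z i = (if i ∈ P then 1 else 0) - (if i ∈ N then 1 else 0)) (f : ι → ℤ) :
    ∑ i, z i * f i = z g * f g + ∑ i ∈ P, f i - ∑ i ∈ N, f i := by
  rw [← add_sum_erase univ _ (mem_univ g), add_sub_assoc]
  congr 1
  rw [sum_congr rfl fun i hi => by rw [hz i (ne_of_mem_erase hi)]]
  simp only [sub_mul, ite_mul, one_mul, zero_mul, sum_sub_distrib, sum_ite_mem]
  rw [inter_eq_right.2 fun i hi => mem_erase.2 ⟨ne_of_mem_of_not_mem hi hP, mem_univ i⟩,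
    inter_eq_right.2 fun i hi => mem_erase.2 ⟨ne_of_mem_of_not_mem hi hN, mem_univ i⟩]

lemma sum_mul_self_eq_of_eq_indicator_sub_indicator (hP : g ∉ P) (hN : g ∉ N)
    (hPN : Disjoint P N)
    (hz : ∀ i ≠ g, z i = (if i ∈ P then 1 else 0) - (if i ∈ N then 1 else 0)) :
    ∑ i, z i * z i = z g * z g + #P + #N := by
  rw [sum_mul_eq_of_eq_indicator_sub_indicator hP hN hz,
    sum_congr rfl fun i hi => hz i (ne_of_mem_of_not_mem hi hP),
    sum_congr rfl fun i hi => hz i (ne_of_mem_of_not_mem hi hN)]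
  simp [disjoint_iff_inter_eq_empty.1 hPN, disjoint_iff_inter_eq_empty.1 hPN.symm]

end Splitting

section Breaking

variable {m : ℕ} {σ : Fin m → ℤ} {j g : Fin m} {A : Finset (Fin m)} {x y : Fin m → ℤ}

lemma exists_exchange_of_breaking (hpos : ∀ i, 0 < σ i) (hjA : j ∉ A) (hgj : g ≠ j)
    (hgA : g ∉ A) (hv : ∀ i, x i + y i = if i = j then -1 else if i ∈ A then 1 else 0)
    (hoff : ∀ i ≠ g, x i * y i = 0) (hgxy : x g * y g = -1) (hxj : x j = 0)
    (hxσ : ∑ i, x i * σ i = 0) (hxx : 3 ≤ ∑ i, x i * x i) (hyy : 3 ≤ ∑ i, y i * y i) :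
    ∃ B ⊆ A, 1 < #B ∧ (A \ B).Nonempty ∧ σ g = ∑ i ∈ B, σ i := by
  set B := A.filter (x · = 1)
  have hx : ∀ i ≠ g, x i = (if i ∈ B then 1 else 0) - (if i ∈ (∅ : Finset _) then 1 else 0) := by
    intro i hi
    have := hv i
    rcases mul_eq_zero.1 (hoff i hi) with h | h <;>
      simp only [B, mem_filter, notMem_empty] <;> split_ifs <;> grind
  have hy : ∀ i ≠ g,
      y i = (if i ∈ A \ B then 1 else 0) - (if i ∈ ({j} : Finset _) then 1 else 0) := by
    intro i hi
    have := hv i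
    rcases mul_eq_zero.1 (hoff i hi) with h | h <;>
      simp only [B, mem_filter, mem_sdiff, mem_singleton] <;> split_ifs <;> grind
  have hgB : g ∉ B := fun h => hgA (mem_filter.1 h).1
  have hgC : g ∉ A \ B := fun h => hgA (mem_sdiff.1 h).1
  have hxσ' : x g * σ g + ∑ i ∈ B, σ i = 0 := by
    simpa [hxσ] using (sum_mul_eq_of_eq_indicator_sub_indicator hgB (notMem_empty g) hx σ).symm
  have hxx' := sum_mul_self_eq_of_eq_indicator_sub_indicator hgB (notMem_empty g)
    (disjoint_empty_right _) hx
  have hyy' := sum_mul_self_eq_of_eq_indicator_sub_indicator hgC (by simpa using hgj)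
    (disjoint_singleton_right.2 fun h => hjA (mem_sdiff.1 h).1) hy
  obtain ⟨hxg, hyg⟩ | ⟨hxg, hyg⟩ := Int.eq_one_or_neg_one_of_mul_eq_neg_one' hgxy <;>
    rw [hxg] at hxσ'
  · linarith [hpos g, sum_nonneg fun i (_ : i ∈ B) => (hpos i).le]
  refine ⟨B, filter_subset _ _, ?_, ?_, by linarith⟩
  · simp only [hxg, card_empty] at hxx'
    omega
  · simp only [hyg, card_singleton] at hyy'
    rw [← card_pos]
    omega

end Breaking

theorem changemaker_standard_basis_unbreakable_general (n : ℕ) (σ : Fin (n + 1) → ℤ)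
    (hσ : IsChangemaker σ) (j : Fin (n + 1))
    (A : Finset (Fin (n + 1))) (hA : ∀ i ∈ A, i < j)
    (hsum : ∑ i ∈ A, σ i = σ j)
    (hmax : ∀ A' : Finset (Fin (n + 1)), (∀ i ∈ A', i < j) →
      ∑ i ∈ A', σ i = σ j → ∑ i ∈ A', 2 ^ (i : ℕ) ≤ ∑ i ∈ A, 2 ^ (i : ℕ)) :
    ¬ ∃ x y : Fin (n + 1) → ℤ,
      (∑ i, x i * σ i = 0) ∧ (∑ i, y i * σ i = 0) ∧
      (fun k => if k = j then (-1 : ℤ) else if k ∈ A then 1 else 0) = x + y ∧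
      3 ≤ ∑ i, x i * x i ∧ 3 ≤ ∑ i, y i * y i ∧ ∑ i, x i * y i = -1 := by
  rintro ⟨x, y, hxσ, hyσ, hv, hxx, hyy, hxy⟩
  obtain ⟨g, hvg, hgxy, hoff⟩ :=
    exists_mul_eq_neg_one_of_sum_mul_eq_neg_one (fun i => by split_ifs <;> simp) hv.symm hxy
  have hjA : j ∉ A := fun h => (hA j h).false
  have hgj : g ≠ j := by rintro rfl; simp at hvg
  have hgA : g ∉ A := by intro h; simp [hgj, h] at hvg
  have hv' (i) : x i + y i = if i = j then -1 else if i ∈ A then 1 else 0 := (congrFun hv i).symm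
  obtain ⟨B, hBA, hB, hC, hσg⟩ : ∃ B ⊆ A, 1 < #B ∧ (A \ B).Nonempty ∧ σ g = ∑ i ∈ B, σ i := by
    rcases mul_eq_zero.1 (hoff j hgj.symm) with hxj | hyj
    · exact exists_exchange_of_breaking hσ.pos hjA hgj hgA hv' hoff hgxy hxj hxσ hxx hyy
    · exact exists_exchange_of_breaking hσ.pos hjA hgj hgA (fun i => add_comm (y i) _ ▸ hv' i)
        (fun i hi => mul_comm (y i) _ ▸ hoff i hi) (mul_comm (y g) _ ▸ hgxy) hyj hyσ hyy hxx
  obtain ⟨A', hA'j, hA'σ, hlt⟩ :=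
    exists_lt_sum_two_pow_of_exchange hσ.pos hσ.2.1 hA hsum hBA hB hC hgA hσg
  exact (hmax A' hA'j hA'σ).not_gt hlt

/-- **Non-tight standard basis elements are unbreakable.** Let `σ` be a
changemaker, `1 ≤ j ≤ n`, and `A ⊆ {0,…,j-1}` with `Σ_{i∈A} σ_i = σ_j`,
chosen maximal with respect to the total order given by `A ↦ Σ_{i∈A} 2^i`.
Then `v = -e_j + Σ_{i∈A} e_i` is unbreakable in `L = (σ)^⊥`: it is not a sum
`x + y` with `x, y ∈ L`, `|x|, |y| ≥ 3` and `⟨x,y⟩ = -1`. -/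
theorem changemaker_standard_basis_unbreakable (n : ℕ) (σ : Fin (n + 1) → ℤ)
    (hσ : IsChangemaker σ) (j : Fin (n + 1)) (hj : j ≠ 0)
    (A : Finset (Fin (n + 1))) (hA : ∀ i ∈ A, i < j)
    (hsum : ∑ i ∈ A, σ i = σ j)
    (hmax : ∀ A' : Finset (Fin (n + 1)), (∀ i ∈ A', i < j) →
      ∑ i ∈ A', σ i = σ j → ∑ i ∈ A', 2 ^ (i : ℕ) ≤ ∑ i ∈ A, 2 ^ (i : ℕ)) :
    ¬ ∃ x y : Fin (n + 1) → ℤ,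
      (∑ i, x i * σ i = 0) ∧ (∑ i, y i * σ i = 0) ∧
      (fun k => if k = j then (-1 : ℤ) else if k ∈ A then 1 else 0) = x + y ∧
      3 ≤ ∑ i, x i * x i ∧ 3 ≤ ∑ i, y i * y i ∧ ∑ i, x i * y i = -1 :=
  changemaker_standard_basis_unbreakable_general n σ hσ j A hA hsum hmax
end

section
/- Let a_1, …, a_l ≥ 2 be integers with continuants p_l, p_{l−1}, q_l, q_{l−1} and r_l = p_l − q_l, and let b_1, …, b_m ≥ 2 be integers whose continuant numerator equals p_l and whose continuant denominator equals r_l. Then the sequence (a_1, …, a_l, b_m, b_{m−1}, …, b_1) has continuant numerator p_l² − p_l p_{l−1} + p_{l−1}² and continuant denominator p_l q_l − p_l q_{l−1} + p_{l−1} q_{l−1}. -/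
/-- Continuant numerators `p_j` of `[c_1, c_2, …]⁻`:
`p_0 = 1`, `p_1 = c_1`, `p_j = c_j p_{j-1} - p_{j-2}`. -/
def contP (c : ℕ → ℤ) : ℕ → ℤ
  | 0 => 1
  | 1 => c 1
  | (j + 2) => c (j + 2) * contP c (j + 1) - contP c j

/-- Continuant denominators `q_j` of `[c_1, c_2, …]⁻`:
`q_0 = 0`, `q_1 = 1`, `q_j = c_j q_{j-1} - q_{j-2}`. -/
def contQ (c : ℕ → ℤ) : ℕ → ℤ
  | 0 => 0
  | 1 => 1
  | (j + 2) => c (j + 2) * contQ c (j + 1) - contQ c j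

/-! Let `d` be the reversal of `b`. Splitting the concatenation after position `l`, its
continuants are `p_l P_d - p_{l-1} Q_d` and `q_l P_d - q_{l-1} Q_d`, and reversal gives
`P_d = p_b(m) = p_l` and `Q_d = p_b(m-1)`. By the determinant identities
`p_{j-1} q_j - p_j q_{j-1} = 1` for `a` and `b`, both `p_b(m-1)` and `p_l - p_{l-1}` are inverses
of `r_l` modulo `p_l`, and entries `≥ 2` make numerators strictly increasing, so both lie in
`[0, p_l)`. Hence `p_b(m-1) = p_l - p_{l-1}`, and expanding gives the two formulas. -/

theorem contP_succ_succ (c : ℕ → ℤ) (j : ℕ) :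
    contP c (j + 2) = c (j + 2) * contP c (j + 1) - contP c j := rfl

theorem contQ_succ_succ (c : ℕ → ℤ) (j : ℕ) :
    contQ c (j + 2) = c (j + 2) * contQ c (j + 1) - contQ c j := rfl

theorem contP_congr {c c' : ℕ → ℤ} :
    ∀ {n : ℕ}, (∀ i, 1 ≤ i → i ≤ n → c i = c' i) → contP c n = contP c' n
  | 0, _ => rfl
  | 1, h => h 1 le_rfl le_rfl
  | n + 2, h => by
    rw [contP_succ_succ, contP_succ_succ, h (n + 2) (by omega) le_rfl,
      contP_congr fun i hi hin => h i hi (by omega),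
      contP_congr fun i hi hin => h i hi (by omega)]

theorem contQ_congr {c c' : ℕ → ℤ} :
    ∀ {n : ℕ}, (∀ i, 1 ≤ i → i ≤ n → c i = c' i) → contQ c n = contQ c' n
  | 0, _ => rfl
  | 1, _ => rfl
  | n + 2, h => by
    rw [contQ_succ_succ, contQ_succ_succ, h (n + 2) (by omega) le_rfl,
      contQ_congr fun i hi hin => h i hi (by omega),
      contQ_congr fun i hi hin => h i hi (by omega)]

theorem contP_mul_contQ_succ_sub (c : ℕ → ℤ) :
    ∀ n, contP c n * contQ c (n + 1) - contP c (n + 1) * contQ c n = 1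
  | 0 => by simp [contP, contQ]
  | n + 1 => by
    rw [contP_succ_succ, contQ_succ_succ]
    linear_combination contP_mul_contQ_succ_sub c n

theorem eq_mul_contP_sub_mul_contQ {c d x : ℕ → ℤ} {l : ℕ}
    (hx : ∀ j, x (j + 2) = c (j + 2) * x (j + 1) - x j)
    (hd : ∀ i, 1 ≤ i → c (l + 1 + i) = d i) :
    ∀ k, x (l + 1 + k) = x (l + 1) * contP d k - x l * contQ d k
  | 0 => by simp [contP, contQ]
  | 1 => by
    show x (l + 2) = x (l + 1) * d 1 - x l * 1
    rw [hx, ← hd 1 le_rfl]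
    ring
  | k + 2 => by
    have hstep : x (l + 1 + (k + 2)) = d (k + 2) * x (l + 1 + (k + 1)) - x (l + 1 + k) := by
      rw [← hd (k + 2) (by omega)]
      exact hx (l + 1 + k)
    rw [hstep, eq_mul_contP_sub_mul_contQ hx hd (k + 1), eq_mul_contP_sub_mul_contQ hx hd k,
      contP_succ_succ, contQ_succ_succ]
    ring

theorem contP_contQ_reverse (e : ℕ → ℤ) : ∀ m : ℕ,
    contP (fun i => e (m + 2 - i)) (m + 1) = contP e (m + 1) ∧
      contQ (fun i => e (m + 2 - i)) (m + 1) = contP e m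
  | 0 => by simp [contP, contQ]
  | m + 1 => by
    obtain ⟨ihP, ihQ⟩ := contP_contQ_reverse e m
    set rev := fun i => e (m + 1 + 2 - i) with hrev
    have htail : ∀ i, 1 ≤ i → rev (0 + 1 + i) = e (m + 2 - i) := fun i _ => by
      simp only [hrev]; congr 1; omega
    have hP := eq_mul_contP_sub_mul_contQ (contP_succ_succ rev) htail (m + 1)
    have hQ := eq_mul_contP_sub_mul_contQ (contQ_succ_succ rev) htail (m + 1)
    rw [zero_add, add_comm 1, ihP, ihQ] at hP hQ
    refine ⟨hP.trans ?_, hQ.trans ?_⟩ <;> simp [contP, contQ, hrev]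

theorem contP_pos_and_lt_succ {c : ℕ → ℤ} :
    ∀ {n : ℕ}, (∀ i, 1 ≤ i → i ≤ n + 1 → 2 ≤ c i) → 0 < contP c n ∧ contP c n < contP c (n + 1)
  | 0, hc => ⟨one_pos, show (1 : ℤ) < c 1 by linarith [hc 1 le_rfl le_rfl]⟩
  | n + 1, hc => by
    obtain ⟨hpos, hlt⟩ := contP_pos_and_lt_succ (n := n) fun i hi hin => hc i hi (by omega)
    refine ⟨hpos.trans hlt, ?_⟩
    rw [contP_succ_succ]
    nlinarith [hc (n + 2) (by omega) le_rfl]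

theorem eq_of_mul_sub_mul_eq_one {P r x y u v : ℤ} (hx : x * r - P * u = 1)
    (hy : y * r - P * v = 1) (hx₀ : 0 ≤ x) (hxP : x < P) (hy₀ : 0 ≤ y) (hyP : y < P) :
    x = y := by
  have hcop : IsCoprime P r := ⟨-u, x, by linear_combination hx⟩
  have hdvd : P ∣ x - y := hcop.dvd_of_dvd_mul_right ⟨u - v, by linear_combination hx - hy⟩
  have := Int.eq_zero_of_abs_lt_dvd hdvd (abs_sub_lt_iff.mpr ⟨by linarith, by linarith⟩)
  linarith

theorem contP_eq_sub_of_contQ_eq_sub {a b : ℕ → ℤ} {l m : ℕ}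
    (ha : ∀ i, 1 ≤ i → i ≤ l + 1 → 2 ≤ a i) (hb : ∀ i, 1 ≤ i → i ≤ m + 1 → 2 ≤ b i)
    (hnum : contP b (m + 1) = contP a (l + 1))
    (hden : contQ b (m + 1) = contP a (l + 1) - contQ a (l + 1)) :
    contP b m = contP a (l + 1) - contP a l := by
  obtain ⟨hb₀, hbP⟩ := contP_pos_and_lt_succ hb
  obtain ⟨ha₀, haP⟩ := contP_pos_and_lt_succ ha
  have hdet_b := contP_mul_contQ_succ_sub b m
  have hdet_a := contP_mul_contQ_succ_sub a l
  rw [hnum, hden] at hdet_b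
  rw [hnum] at hbP
  refine eq_of_mul_sub_mul_eq_one hdet_b (v := contP a (l + 1) - contQ a (l + 1) - contP a l +
    contQ a l) ?_ hb₀.le hbP (by linarith) (by linarith)
  linear_combination hdet_a

/-- **Concatenation with the full reversal.** Let `a_1,…,a_l ≥ 2` have
continuants `p_l, p_{l-1}, q_l, q_{l-1}` and `r_l = p_l - q_l`, and let
`b_1,…,b_m ≥ 2` satisfy `[b_1,…,b_m]⁻ = p_l / r_l`.  Then the sequence
`(a_1,…,a_l, b_m,…,b_1)` has continuant numerator
`p_l² - p_l p_{l-1} + p_{l-1}²` and denominator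
`p_l q_l - p_l q_{l-1} + p_{l-1} q_{l-1}`. -/
theorem continuant_concat_reversal (l m : ℕ) (hl : 1 ≤ l) (hm : 1 ≤ m)
    (a b : ℕ → ℤ)
    (ha : ∀ i, 1 ≤ i → i ≤ l → 2 ≤ a i) (hb : ∀ i, 1 ≤ i → i ≤ m → 2 ≤ b i)
    (hnum : contP b m = contP a l)
    (hden : contQ b m = contP a l - contQ a l)
    (c : ℕ → ℤ)
    (hc : c = fun i => if i ≤ l then a i else b (l + m + 1 - i)) :
    contP c (l + m) =
      contP a l ^ 2 - contP a l * contP a (l - 1) + contP a (l - 1) ^ 2 ∧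
    contQ c (l + m) =
      contP a l * contQ a l - contP a l * contQ a (l - 1) +
        contP a (l - 1) * contQ a (l - 1) := by
  obtain ⟨l, rfl⟩ := Nat.exists_eq_add_of_le' hl
  obtain ⟨m, rfl⟩ := Nat.exists_eq_add_of_le' hm
  have hpen := contP_eq_sub_of_contQ_eq_sub ha hb hnum hden
  have hca : ∀ {n}, n ≤ l + 1 → ∀ i, 1 ≤ i → i ≤ n → c i = a i := fun hn i _ hi => by
    rw [hc]
    exact if_pos (hi.trans hn)
  have htail : ∀ i, 1 ≤ i → c (l + 1 + i) = b (m + 2 - i) := fun i hi => by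
    simp only [hc, if_neg (by omega : ¬l + 1 + i ≤ l + 1)]
    congr 1
    omega
  obtain ⟨hrevP, hrevQ⟩ := contP_contQ_reverse b m
  rw [Nat.add_sub_cancel, eq_mul_contP_sub_mul_contQ (contP_succ_succ c) htail,
    eq_mul_contP_sub_mul_contQ (contQ_succ_succ c) htail, hrevP, hrevQ,
    contP_congr (hca le_rfl), contP_congr (hca l.le_succ), contQ_congr (hca le_rfl),
    contQ_congr (hca l.le_succ), hnum, hpen]
  constructor <;> ring
end
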